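/- Define f(p) = ln(2 + 4^p) + (p−1)·ln(2·3^{p/(p−1)} + 1) and w(p) = p·f'(p) − f(p) for p ∈ (1,2]. Then lim_{p→1⁺} w(p) = (2/3)·ln 4 − ln 3, which is negative. -/

import Mathlib

/-!
Put `t = p / (p - 1)`, so that `t → ∞` as `p → 1⁺`. Since
`log (2·3^t + 1) = t log 3 + log (2 + 3^{-t})` and `(p - 1) t = p`, the terms `p log 3` cancel in
`w p`, which becomes a function of `p` continuous at `1` (with value `(2/3) log 4 - log 6`) plus
`log (2 + 3^{-t}) + log 3 · t / (2·3^t + 1)`, which tends to `log 2`. Negativity is `4² < 3³`.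
-/

open Filter Topology

/-- `f(p) = ln(2 + 4^p) + (p−1)·ln(2·3^{p/(p−1)} + 1)`. -/
noncomputable def f (p : ℝ) : ℝ :=
  Real.log (2 + (4 : ℝ) ^ p)
    + (p - 1) * Real.log (2 * (3 : ℝ) ^ (p / (p - 1)) + 1)

/-- `f'(p)`, the derivative of `f` on `(1,2]`. -/
noncomputable def f' (p : ℝ) : ℝ :=
  ((4 : ℝ) ^ p / (2 + (4 : ℝ) ^ p)) * Real.log 4
    + Real.log (2 + (3 : ℝ) ^ (-(p / (p - 1)))) + Real.log 3
    + Real.log 3 / ((p - 1) * (2 * (3 : ℝ) ^ (p / (p - 1)) + 1))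

/-- `w(p) = p·f'(p) − f(p)`. -/
noncomputable def w (p : ℝ) : ℝ := p * f' p - f p

open Real

lemma Real.log_mul_rpow_add_one {a b : ℝ} (ha : 0 ≤ a) (hb : 0 < b) (t : ℝ) :
    log (a * b ^ t + 1) = t * log b + log (a + b ^ (-t)) := by
  have hfactor : a * b ^ t + 1 = b ^ t * (a + b ^ (-t)) := by
    rw [mul_add, ← rpow_add hb, add_neg_cancel, rpow_zero, mul_comm]
  rw [hfactor, log_mul (rpow_pos_of_pos hb t).ne' (by positivity), log_rpow hb]

lemma tendsto_rpow_neg_atTop_nhds_zero {b : ℝ} (hb : 1 < b) :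
    Tendsto (fun t : ℝ => b ^ (-t)) atTop (𝓝 0) :=
  (tendsto_rpow_atBot_of_base_gt_one b hb).comp tendsto_neg_atTop_atBot

lemma tendsto_mul_rpow_neg_atTop_nhds_zero {b : ℝ} (hb : 1 < b) :
    Tendsto (fun t : ℝ => t * b ^ (-t)) atTop (𝓝 0) := by
  refine (tendsto_rpow_mul_exp_neg_mul_atTop_nhds_zero 1 (log b) (log_pos hb)).congr fun t => ?_
  rw [rpow_one, rpow_def_of_pos (by linarith), neg_mul, mul_neg]

lemma tendsto_div_mul_rpow_add_one_atTop {a b : ℝ} (ha : 0 < a) (hb : 1 < b) :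
    Tendsto (fun t : ℝ => t / (a * b ^ t + 1)) atTop (𝓝 0) := by
  have hlim := (tendsto_mul_rpow_neg_atTop_nhds_zero hb).div
    ((tendsto_rpow_neg_atTop_nhds_zero hb).const_add a) (by simpa using ha.ne')
  rw [zero_div] at hlim
  refine hlim.congr fun t => ?_
  simp only [Pi.div_apply]
  have hbt : b ^ t * b ^ (-t) = 1 := by rw [← rpow_add (by linarith), add_neg_cancel, rpow_zero]
  have hpos : 0 < b ^ (-t) := rpow_pos_of_pos (by linarith) _
  field_simp
  linear_combination a * t * hbt

lemma tendsto_div_sub_one_nhdsGT_one_atTop :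
    Tendsto (fun p : ℝ => p / (p - 1)) (𝓝[>] 1) atTop := by
  have hsub : Tendsto (fun p : ℝ => p - 1) (𝓝[>] 1) (𝓝[>] 0) :=
    tendsto_nhdsWithin_iff.2
      ⟨((continuous_sub_right (1 : ℝ)).tendsto' 1 0 (sub_self 1)).mono_left nhdsWithin_le_nhds,
        eventually_mem_nhdsWithin.mono fun p hp => Set.mem_Ioi.2 (sub_pos.2 hp)⟩
  have hid : Tendsto (fun p : ℝ => p) (𝓝[>] 1) (𝓝 1) := nhdsWithin_le_nhds
  simpa only [div_eq_mul_inv, Function.comp_def] using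
    hid.pos_mul_atTop one_pos (tendsto_inv_nhdsGT_zero.comp hsub)

lemma two_div_three_mul_log_four_lt_log_three : 2 / 3 * log 4 < log 3 := by
  have h : log ((4 : ℝ) ^ 2) < log ((3 : ℝ) ^ 3) := log_lt_log (by norm_num) (by norm_num)
  rw [log_pow, log_pow] at h
  push_cast at h
  linarith

lemma w_eq_of_ne_one {p : ℝ} (hp : p ≠ 1) :
    w p = p * ((4 : ℝ) ^ p / (2 + (4 : ℝ) ^ p)) * log 4 - log (2 + (4 : ℝ) ^ p)
      + (log (2 + (3 : ℝ) ^ (-(p / (p - 1))))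
        + log 3 * (p / (p - 1) / (2 * (3 : ℝ) ^ (p / (p - 1)) + 1))) := by
  have hp1 : p - 1 ≠ 0 := sub_ne_zero.2 hp
  have hpos : 0 < 2 * (3 : ℝ) ^ (p / (p - 1)) + 1 := by positivity
  rw [w, f, f', log_mul_rpow_add_one zero_le_two three_pos]
  field_simp
  ring

theorem w_tendsto_and_neg :
    Tendsto w (𝓝[>] (1 : ℝ)) (𝓝 ((2 / 3) * Real.log 4 - Real.log 3)) ∧
    (2 / 3) * Real.log 4 - Real.log 3 < 0 := by
  refine ⟨?_, sub_neg.2 two_div_three_mul_log_four_lt_log_three⟩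
  have hregular : Tendsto (fun p : ℝ => p * ((4 : ℝ) ^ p / (2 + (4 : ℝ) ^ p)) * log 4
      - log (2 + (4 : ℝ) ^ p)) (𝓝[>] 1) (𝓝 (2 / 3 * log 4 - log 6)) := by
    have hcont : ContinuousAt (fun p : ℝ => p * ((4 : ℝ) ^ p / (2 + (4 : ℝ) ^ p)) * log 4
        - log (2 + (4 : ℝ) ^ p)) 1 := by
      fun_prop (disch := positivity)
    convert hcont.tendsto.mono_left nhdsWithin_le_nhds using 2
    norm_num
  have hsingular : Tendsto (fun t : ℝ => log (2 + (3 : ℝ) ^ (-t))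
      + log 3 * (t / (2 * (3 : ℝ) ^ t + 1))) atTop (𝓝 (log 2)) := by
    simpa using (((tendsto_rpow_neg_atTop_nhds_zero (by norm_num)).const_add 2).log
      (by norm_num)).add ((tendsto_div_mul_rpow_add_one_atTop two_pos (by norm_num)).const_mul
        (log 3))
  have hlim := hregular.add (hsingular.comp tendsto_div_sub_one_nhdsGT_one_atTop)
  rw [show (6 : ℝ) = 2 * 3 by norm_num, log_mul two_ne_zero three_ne_zero,
    show 2 / 3 * log 4 - (log 2 + log 3) + log 2 = 2 / 3 * log 4 - log 3 by ring] at hlim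
  exact hlim.congr' <| eventually_mem_nhdsWithin.mono fun p hp =>
    (w_eq_of_ne_one (ne_of_gt hp)).symm
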